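/- Let G be a group such that the derived subgroup G' is finite, G/Z(G) is finite and can be generated by d elements, and equality |G/Z(G)| = |G'|^d holds. Then every element of G' is a commutator, i.e., G' = K(G) where K(G) = { [x, y] : x, y ∈ G }. -/

import Mathlib

/-!
If `f i` generate `G` modulo its center, then `Z(G)` is the intersection of the centralizers of
the `f i`, so `gZ(G) ↦ (⁅g, f i⁆)ᵢ` embeds `G/Z(G)` into `d`-tuples of commutators. Hence
`|G/Z(G)| ≤ |K(G)|ᵈ ≤ |G'|ᵈ`, and equality forces `|K(G)| = |G'|`, i.e. `K(G) = G'`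
(for `d = 0` the group is abelian and both sides are trivial).
-/

section

open Subgroup

variable {G : Type*} [Group G]

theorem Subgroup.center_eq_iInf_centralizer_of_closure_mk_eq_top {ι : Type*} {f : ι → G}
    (hf : closure (Set.range fun i => (f i : G ⧸ center G)) = ⊤) :
    center G = ⨅ i, centralizer {f i} := by
  refine le_antisymm (le_iInf fun i => center_le_centralizer _) fun g hg => ?_
  have hZ : center G ≤ centralizer {g} := center_le_centralizer _
  have hmap : (centralizer {g}).map (QuotientGroup.mk' (center G)) = ⊤ := by
    rw [eq_top_iff, ← hf, closure_le]
    rintro _ ⟨i, rfl⟩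
    refine ⟨f i, ?_, rfl⟩
    rw [SetLike.mem_coe, mem_centralizer_singleton_iff]
    exact (mem_centralizer_singleton_iff.mp (mem_iInf.mp hg i)).symm
  have htop : centralizer {g} = ⊤ := by
    rw [← comap_map_eq_self (H := centralizer {g}) (f := QuotientGroup.mk' (center G))
      (by rwa [QuotientGroup.ker_mk']), hmap, comap_top]
  exact mem_center_iff.mpr fun h => mem_centralizer_singleton_iff.mp (htop ▸ mem_top h)

theorem Subgroup.card_quotient_center_le_pow [Group.FG (G ⧸ center G)]
    [Finite (commutatorSet G)] :
    Nat.card (G ⧸ center G) ≤ Nat.card (commutatorSet G) ^ Group.rank (G ⧸ center G) := by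
  obtain ⟨S, hcard, hS⟩ := Group.rank_spec (G ⧸ center G)
  have hf : closure (Set.range fun s : S => ((s : G ⧸ center G).out : G ⧸ center G)) = ⊤ := by
    simpa using hS
  rw [← hcard, ← Nat.card_eq_finsetCard, ← Nat.card_fun]
  exact Finite.card_le_of_embedding <|
    (quotientEquivOfEq (center_eq_iInf_centralizer_of_closure_mk_eq_top hf)).toEmbedding.trans
      ((quotientiInfEmbedding _).trans
        (Function.Embedding.piCongrRight fun s => quotientCentralizerEmbedding _))

theorem commutatorSet_subset_commutator : commutatorSet G ⊆ commutator G := by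
  rw [commutator_eq_closure]
  exact subset_closure

theorem setOf_inv_mul_inv_mul_mul_eq_commutatorSet :
    {c : G | ∃ x y : G, c = x⁻¹ * y⁻¹ * x * y} = commutatorSet G := by
  ext c
  constructor
  · rintro ⟨x, y, rfl⟩
    exact ⟨x⁻¹, y⁻¹, by group⟩
  · rintro ⟨x, y, rfl⟩
    exact ⟨x⁻¹, y⁻¹, by group⟩

end

theorem commutator_eq_commutatorSet_of_card_eq (G : Type*) [Group G]
    [Finite (commutator G)] [Finite (G ⧸ Subgroup.center G)]
    (heq : Nat.card (G ⧸ Subgroup.center G) =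
      Nat.card (commutator G) ^ Group.rank (G ⧸ Subgroup.center G)) :
    (commutator G : Set G) = {c : G | ∃ x y : G, c = x⁻¹ * y⁻¹ * x * y} := by
  have hK : commutatorSet G ⊆ commutator G := commutatorSet_subset_commutator
  have : Finite (commutatorSet G) := Finite.Set.subset _ hK
  rw [setOf_inv_mul_inv_mul_mul_eq_commutatorSet]
  by_cases hd : Group.rank (G ⧸ Subgroup.center G) = 0
  · rw [hd, pow_zero] at heq
    have hbot : commutator G = ⊥ :=
      (commutator_eq_bot_iff_center_eq_top G).mpr (Subgroup.index_eq_one.mp heq)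
    refine (Set.Subset.antisymm hK ?_).symm
    rw [hbot, Subgroup.coe_bot, Set.singleton_subset_iff]
    exact one_mem_commutatorSet G
  · have hle := Subgroup.card_quotient_center_le_pow (G := G)
    rw [heq, pow_le_pow_iff_left₀ (Nat.zero_le _) (Nat.zero_le _) hd] at hle
    exact (Set.eq_of_subset_of_ncard_le hK hle (Set.toFinite _)).symm
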